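/- Let X be a finite type and k ∈ ℕ. Assume χ : X^{k+1} → ℂ is antisymmetric, i.e. χ(x_{σ(0)},…,x_{σ(k)}) = sgn(σ)·χ(x_0,…,x_k) for every permutation σ of {0,…,k}. Define the Alexander–Spanier coboundary (δχ)(x_0,…,x_{k+1}) = Σ_{i=0}^{k+1} (−1)^i χ(x_0,…,x̂_i,…,x_{k+1}) (entry x_i omitted), and define the Hochschild coboundary of τ_χ by (bτ_χ)(A_0,…,A_{k+1}) := Σ_{i=0}^{k} (−1)^i τ_χ(A_0,…,A_i·A_{i+1},…,A_{k+1}) + (−1)^{k+1} τ_χ(A_{k+1}·A_0, A_1,…,A_k), where (A·B)(x,z) = Σ_{y ∈ X} A(x,y)B(y,z) is the kernel product. Then for all kernels A_0,…,A_{k+1} : X × X → ℂ one has (bτ_χ)(A_0,…,A_{k+1}) = − τ_{δχ}(A_0,…,A_{k+1}). -/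
import Mathlib


namespace Stmt5

/-- The functional `τ_χ(A₀,…,A_k) = ∑_{x₀,…,x_k} A₀(x₀,x₁)⋯A_k(x_k,x₀)·χ(x₀,…,x_k)`. -/
noncomputable def tau {X : Type*} [Fintype X] {k : ℕ}
    (χ : (Fin (k + 1) → X) → ℂ) (A : Fin (k + 1) → X → X → ℂ) : ℂ :=
  ∑ x : Fin (k + 1) → X, (∏ i : Fin (k + 1), A i (x i) (x (i + 1))) * χ x

/-- The Alexander–Spanier coboundary
`(δχ)(x₀,…,x_{k+1}) = ∑ᵢ (−1)^i χ(x₀,…,x̂ᵢ,…,x_{k+1})`. -/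
noncomputable def deltaAS {X : Type*} {k : ℕ} (χ : (Fin (k + 1) → X) → ℂ) : (Fin (k + 2) → X) → ℂ :=
  fun x => ∑ i : Fin (k + 2), (-1 : ℂ) ^ (i : ℕ) * χ (fun j => x (i.succAbove j))

/-- Kernel product `(A·B)(x,z) = ∑_y A(x,y)·B(y,z)`. -/
noncomputable def kmul {X : Type*} [Fintype X] (A B : X → X → ℂ) : X → X → ℂ :=
  fun x z => ∑ y : X, A x y * B y z

/-- The family `(A₀, …, Aᵢ·Aᵢ₊₁, …, A_{k+1})` of `k+1` kernels. -/
noncomputable def contract {X : Type*} [Fintype X] {k : ℕ}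
    (A : Fin (k + 2) → X → X → ℂ) (i : Fin (k + 1)) : Fin (k + 1) → X → X → ℂ :=
  fun j =>
    if (j : ℕ) < (i : ℕ) then A j.castSucc
    else if (j : ℕ) = (i : ℕ) then kmul (A i.castSucc) (A i.succ)
    else A j.succ

/-- The family `(A_{k+1}·A₀, A₁, …, A_k)` of `k+1` kernels. -/
noncomputable def lastContract {X : Type*} [Fintype X] {k : ℕ}
    (A : Fin (k + 2) → X → X → ℂ) : Fin (k + 1) → X → X → ℂ :=
  fun j =>
    if (j : ℕ) = 0 then kmul (A (Fin.last (k + 1))) (A 0) else A j.castSucc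

/-- The Hochschild coboundary
`(bτ_χ)(A₀,…,A_{k+1}) = ∑_{i=0}^{k} (−1)^i τ_χ(A₀,…,Aᵢ·Aᵢ₊₁,…,A_{k+1})
  + (−1)^{k+1} τ_χ(A_{k+1}·A₀, A₁,…,A_k)`. -/
noncomputable def bTau {X : Type*} [Fintype X] {k : ℕ}
    (χ : (Fin (k + 1) → X) → ℂ) (A : Fin (k + 2) → X → X → ℂ) : ℂ :=
  (∑ i : Fin (k + 1), (-1 : ℂ) ^ (i : ℕ) * tau χ (contract A i)) +
    (-1 : ℂ) ^ (k + 1) * tau χ (lastContract A)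

/-! Helper lemmas -/

lemma val_add_one' {n : ℕ} (a : Fin (n + 1)) :
    ((a + 1 : Fin (n + 1)) : ℕ) = if (a : ℕ) = n then 0 else (a : ℕ) + 1 := by
  rw [Fin.val_add_one]
  split_ifs with h h' h' <;> simp_all [Fin.ext_iff]

lemma val_succAbove {k : ℕ} (i m : Fin (k + 1)) :
    (((i.succ).succAbove m : Fin (k + 2)) : ℕ)
      = if (m : ℕ) ≤ (i : ℕ) then (m : ℕ) else (m : ℕ) + 1 := by
  simp only [Fin.succAbove, Fin.lt_def, Fin.coe_castSucc, Fin.val_succ]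
  split_ifs <;> simp <;> omega

lemma aux1 {k : ℕ} (i j : Fin (k + 1)) (h : j ≠ i) :
    (i.succ).succAbove j + 1 = (i.succ).succAbove (j + 1) := by
  have hv : (j : ℕ) ≠ (i : ℕ) := Fin.val_ne_iff.2 h
  have hi := i.isLt
  have hj := j.isLt
  ext
  rw [val_add_one', val_succAbove, val_succAbove, val_add_one']
  split_ifs <;> omega

lemma aux2 {k : ℕ} (i : Fin (k + 1)) : (i.succ).succAbove i = i.castSucc := by
  ext; rw [val_succAbove]; simp

lemma aux4 {k : ℕ} (i : Fin (k + 1)) : i.succ + 1 = (i.succ).succAbove (i + 1) := by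
  have hi := i.isLt
  ext
  rw [val_add_one', val_succAbove, val_add_one']
  simp only [Fin.val_succ]
  split_ifs <;> omega

lemma contract_apply_ne {X : Type*} [Fintype X] {k : ℕ}
    (A : Fin (k + 2) → X → X → ℂ) (i j : Fin (k + 1)) (h : j ≠ i) :
    contract A i j = A ((i.succ).succAbove j) := by
  have hv : (j : ℕ) ≠ (i : ℕ) := Fin.val_ne_iff.2 h
  unfold contract
  rcases lt_or_gt_of_ne hv with hlt | hgt
  · have hc : j.castSucc = (i.succ).succAbove j := by
      ext; rw [val_succAbove]; simp only [Fin.coe_castSucc]; split_ifs <;> omega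
    rw [if_pos hlt, hc]
  · have hc : j.succ = (i.succ).succAbove j := by
      ext; rw [val_succAbove]; simp only [Fin.val_succ]; split_ifs <;> omega
    rw [if_neg (by omega), if_neg (by omega), hc]

lemma contract_apply_self {X : Type*} [Fintype X] {k : ℕ}
    (A : Fin (k + 2) → X → X → ℂ) (i : Fin (k + 1)) :
    contract A i i = kmul (A i.castSucc) (A i.succ) := by
  simp [contract]

lemma prod_insertNth {X : Type*} [Fintype X] {k : ℕ}
    (A : Fin (k + 2) → X → X → ℂ) (i : Fin (k + 1)) (y : X) (z : Fin (k + 1) → X)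
    (x : Fin (k + 2) → X) (hx : x = Fin.insertNth (α := fun _ => X) i.succ y z) :
    (∏ m : Fin (k + 2), A m (x m) (x (m + 1))) =
      (A i.castSucc (z i) y * A i.succ y (z (i + 1))) *
        ∏ j ∈ Finset.univ.erase i, A ((i.succ).succAbove j) (z j) (z (j + 1)) := by
  have hxp : x i.succ = y := by rw [hx]; exact Fin.insertNth_apply_same _ _ _
  have hxs : ∀ j, x ((i.succ).succAbove j) = z j := fun j => by
    rw [hx]; exact Fin.insertNth_apply_succAbove _ _ _ _
  rw [Fin.prod_univ_succAbove (fun m => A m (x m) (x (m + 1))) i.succ]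
  rw [← Finset.mul_prod_erase Finset.univ
      (fun j => A ((i.succ).succAbove j) (x ((i.succ).succAbove j))
        (x ((i.succ).succAbove j + 1))) (Finset.mem_univ i)]
  have h1 : x (i.succ + 1) = z (i + 1) := by rw [aux4]; exact hxs _
  have h2 : x ((i.succ).succAbove i + 1) = y := by
    rw [aux2, Fin.coeSucc_eq_succ]; exact hxp
  have h3 : ∀ j ∈ Finset.univ.erase i,
      A ((i.succ).succAbove j) (x ((i.succ).succAbove j)) (x ((i.succ).succAbove j + 1))
        = A ((i.succ).succAbove j) (z j) (z (j + 1)) := by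
    intro j hj
    rw [hxs, aux1 _ _ (Finset.ne_of_mem_erase hj), hxs]
  rw [Finset.prod_congr rfl h3, hxp, h1, hxs i, h2, aux2]
  ring

lemma tau_contract {X : Type*} [Fintype X] {k : ℕ}
    (χ : (Fin (k + 1) → X) → ℂ) (A : Fin (k + 2) → X → X → ℂ) (i : Fin (k + 1)) :
    tau χ (contract A i) =
      ∑ x : Fin (k + 2) → X,
        (∏ m : Fin (k + 2), A m (x m) (x (m + 1))) * χ (fun j => x ((i.succ).succAbove j)) := by
  rw [← Equiv.sum_comp (Fin.insertNthEquiv (fun _ => X) i.succ)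
      (fun x => (∏ m : Fin (k + 2), A m (x m) (x (m + 1)))
        * χ (fun j => x ((i.succ).succAbove j)))]
  rw [Fintype.sum_prod_type, Finset.sum_comm]
  rw [tau]
  refine Finset.sum_congr rfl fun z _ => ?_
  rw [← Finset.mul_prod_erase Finset.univ
      (fun j => contract A i j (z j) (z (j + 1))) (Finset.mem_univ i)]
  simp only [contract_apply_self, kmul]
  rw [Finset.prod_congr rfl (fun j hj =>
    by rw [contract_apply_ne A i j (Finset.ne_of_mem_erase hj)])]
  rw [Finset.sum_mul, Finset.sum_mul]
  refine Finset.sum_congr rfl fun y _ => ?_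
  simp only [Fin.insertNthEquiv_apply, Fin.insertNth_apply_succAbove]
  rw [prod_insertNth A i y z _ rfl]

lemma prod_cons {X : Type*} [Fintype X] {k : ℕ}
    (A : Fin (k + 2) → X → X → ℂ) (y : X) (z : Fin (k + 1) → X)
    (x : Fin (k + 2) → X) (hx : x = Fin.cons (α := fun _ => X) y (fun j => z (j + 1))) :
    (∏ m : Fin (k + 2), A m (x m) (x (m + 1))) =
      (A (Fin.last (k + 1)) (z 0) y * A 0 y (z 1)) *
        ∏ j : Fin k, A ((j.succ).castSucc) (z j.succ) (z (j.succ + 1)) := by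
  have hx0 : x 0 = y := by rw [hx]; rfl
  have hxs : ∀ j : Fin (k + 1), x j.succ = z (j + 1) := by
    intro j; rw [hx]; exact Fin.cons_succ _ _ _
  rw [Fin.prod_univ_succ (fun m => A m (x m) (x (m + 1)))]
  rw [Fin.prod_univ_castSucc (fun j : Fin (k + 1) => A j.succ (x j.succ) (x (j.succ + 1)))]
  have e1 : (1 : Fin (k + 2)) = (0 : Fin (k + 1)).succ := by simp
  have h01 : x 1 = z 1 := by rw [e1, hxs]; norm_num
  have hlast1 : x ((Fin.last k).succ) = z 0 := by
    rw [hxs]; congr 1; ext; simp [Fin.val_add_one]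
  have hlast2 : x ((Fin.last k).succ + 1) = y := by
    have : (Fin.last k).succ + 1 = (0 : Fin (k + 2)) := by
      ext; rw [val_add_one']; simp
    rw [this, hx0]
  have hcast : ∀ j : Fin k,
      A (j.castSucc).succ (x (j.castSucc).succ) (x ((j.castSucc).succ + 1))
        = A ((j.succ).castSucc) (z j.succ) (z (j.succ + 1)) := by
    intro j
    have e2 : (j.castSucc).succ = (j.succ).castSucc := Fin.succ_castSucc j
    have e3 : x ((j.succ).castSucc) = z j.succ := by
      rw [← e2, hxs]; congr 1; exact Fin.coeSucc_eq_succ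
    have e4 : x ((j.succ).castSucc + 1) = z (j.succ + 1) := by
      rw [Fin.coeSucc_eq_succ, hxs]
    rw [e2, e3, e4]
  simp only [zero_add, hx0, h01, hlast1, hlast2]
  rw [Finset.prod_congr rfl (fun j _ => hcast j)]
  have hsl : (Fin.last k).succ = Fin.last (k + 1) := by simp [Fin.succ_last]
  rw [hsl]
  ring

lemma rot_sum {X : Type*} [Fintype X] (k : ℕ) (f : (Fin (k + 1) → X) → ℂ) :
    ∑ w : Fin (k + 1) → X, f w = ∑ z : Fin (k + 1) → X, f (fun j => z (j + 1)) := by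
  refine (Fintype.sum_equiv (Equiv.arrowCongr (finRotate (k + 1)).symm (Equiv.refl X)) _ _ ?_).symm
  intro z
  congr 1
  funext j
  simp [Equiv.arrowCongr]

lemma tau_lastContract {X : Type*} [Fintype X] {k : ℕ}
    (χ : (Fin (k + 1) → X) → ℂ)
    (hχ : ∀ (σ : Equiv.Perm (Fin (k + 1))) (x : Fin (k + 1) → X),
        χ (x ∘ σ) = ((Equiv.Perm.sign σ : ℤ) : ℂ) * χ x)
    (A : Fin (k + 2) → X → X → ℂ) :
    tau χ (lastContract A) =
      (-1 : ℂ) ^ k * ∑ x : Fin (k + 2) → X,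
        (∏ m : Fin (k + 2), A m (x m) (x (m + 1)))
          * χ (fun j => x ((0 : Fin (k + 2)).succAbove j)) := by
  have hsign : ∀ z : Fin (k + 1) → X,
      χ (fun j => z (j + 1)) = (-1 : ℂ) ^ k * χ z := by
    intro z
    have h1 : (fun j : Fin (k + 1) => z (j + 1)) = z ∘ (finRotate (k + 1)) := by
      funext j; simp
    rw [h1, hχ, sign_finRotate]
    norm_num
  have hR : (∑ x : Fin (k + 2) → X,
      (∏ m : Fin (k + 2), A m (x m) (x (m + 1)))
        * χ (fun j => x ((0 : Fin (k + 2)).succAbove j))) =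
      (-1 : ℂ) ^ k * ∑ z : Fin (k + 1) → X, ∑ y : X,
        ((A (Fin.last (k + 1)) (z 0) y * A 0 y (z 1)) *
          ∏ j : Fin k, A ((j.succ).castSucc) (z j.succ) (z (j.succ + 1))) * χ z := by
    rw [← Equiv.sum_comp (Fin.consEquiv (fun _ => X))
        (fun x => (∏ m : Fin (k + 2), A m (x m) (x (m + 1)))
          * χ (fun j => x ((0 : Fin (k + 2)).succAbove j))), Fintype.sum_prod_type]
    rw [Finset.sum_congr rfl (fun y _ => rot_sum k
      (fun w => ((fun x => (∏ m : Fin (k + 2), A m (x m) (x (m + 1)))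
          * χ (fun j => x ((0 : Fin (k + 2)).succAbove j)))
        ((Fin.consEquiv (fun _ => X)) (y, w)))))]
    rw [Finset.sum_comm, Finset.mul_sum]
    refine Finset.sum_congr rfl fun z _ => ?_
    rw [Finset.mul_sum]
    refine Finset.sum_congr rfl fun y _ => ?_
    simp only [Fin.consEquiv_apply, Fin.succAbove_zero, Fin.cons_succ]
    rw [prod_cons A y z _ rfl, hsign z]
    ring
  have hN : tau χ (lastContract A) =
      ∑ z : Fin (k + 1) → X, ∑ y : X,
        ((A (Fin.last (k + 1)) (z 0) y * A 0 y (z 1)) *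
          ∏ j : Fin k, A ((j.succ).castSucc) (z j.succ) (z (j.succ + 1))) * χ z := by
    rw [tau]
    refine Finset.sum_congr rfl fun z _ => ?_
    rw [Fin.prod_univ_succ (fun j : Fin (k + 1) => lastContract A j (z j) (z (j + 1)))]
    have hl0 : lastContract A 0 = kmul (A (Fin.last (k + 1))) (A 0) := by
      simp [lastContract]
    have hls : ∀ j : Fin k, lastContract A j.succ = A ((j.succ).castSucc) := by
      intro j; simp [lastContract]
    rw [hl0, Finset.prod_congr rfl (fun j _ => by rw [hls j])]
    simp only [kmul, zero_add]
    rw [Finset.sum_mul, Finset.sum_mul]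
    try exact Finset.sum_congr rfl fun y _ => by ring
  rw [hR, hN, ← mul_assoc, ← mul_pow]
  norm_num

/-- For an antisymmetric `χ : X^{k+1} → ℂ`, the Hochschild coboundary of `τ_χ` is
`− τ_{δχ}` where `δ` is the Alexander–Spanier coboundary. -/
theorem bTau_eq_neg_tau_deltaAS {X : Type*} [Fintype X] {k : ℕ}
    (χ : (Fin (k + 1) → X) → ℂ)
    (hχ : ∀ (σ : Equiv.Perm (Fin (k + 1))) (x : Fin (k + 1) → X),
        χ (x ∘ σ) = ((Equiv.Perm.sign σ : ℤ) : ℂ) * χ x)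
    (A : Fin (k + 2) → X → X → ℂ) :
    bTau χ A = - tau (deltaAS χ) A := by
  set S : Fin (k + 2) → ℂ := fun m => ∑ x : Fin (k + 2) → X,
    (∏ j : Fin (k + 2), A j (x j) (x (j + 1))) * χ (fun j => x (m.succAbove j)) with hS
  have hδ : tau (deltaAS χ) A = ∑ m : Fin (k + 2), (-1 : ℂ) ^ (m : ℕ) * S m := by
    rw [tau]
    simp only [deltaAS, Finset.mul_sum]
    rw [Finset.sum_comm]
    refine Finset.sum_congr rfl fun m _ => ?_
    rw [hS, Finset.mul_sum]
    exact Finset.sum_congr rfl fun x _ => by ring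
  have hb : bTau χ A = (∑ i : Fin (k + 1), (-1 : ℂ) ^ (i : ℕ) * S i.succ) +
      (-1 : ℂ) ^ (k + 1) * ((-1 : ℂ) ^ k * S 0) := by
    rw [bTau, tau_lastContract χ hχ A]
    congr 1
    exact Finset.sum_congr rfl fun i _ => by rw [tau_contract χ A i]
  rw [hb, hδ,
    Fin.sum_univ_succ (f := fun m : Fin (k + 2) => (-1 : ℂ) ^ (m : ℕ) * S m)]
  have h1 : ∀ i : Fin (k + 1),
      (-1 : ℂ) ^ ((i.succ : Fin (k + 2)) : ℕ) * S i.succ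
        = -((-1 : ℂ) ^ (i : ℕ) * S i.succ) := by
    intro i; rw [Fin.val_succ, pow_succ]; ring
  rw [Finset.sum_congr rfl fun i _ => h1 i, Finset.sum_neg_distrib]
  have h2 : (-1 : ℂ) ^ (k + 1) * (-1 : ℂ) ^ k = -1 := by
    rw [← pow_add]
    exact Odd.neg_one_pow ⟨k, by ring⟩
  rw [← mul_assoc, h2]
  try simp
  try ring



end Stmt5
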